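/- Combining the previous two facts: for z = ẑ + e with ẑ fixed nonzero, E[e]=0, E[‖e‖²] = tr(P), and angle θ ∈ [0, π/4] between z and ẑ, we have E[θ] ≤ (1/2) arccos( 2‖ẑ‖² / (‖ẑ‖² + tr(P)) − 1 ), provided the argument of arccos lies in [−1, 1]. -/

import Mathlib

open MeasureTheory Matrix Real Set

/-! For `θ ∈ [0, π/4]` the angle `2θ` lies in `[0, π/2]`, where `cos` is concave, so Jensen gives
`E[2θ] ≤ arccos E[cos 2θ]`, and `cos 2θ = 2 cos² θ - 1` with
`cos² θ = ⟨z, ẑ⟩² / (‖z‖² ‖ẑ‖²)`. The function `(x, y) ↦ x² / y` is convex, and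
`E⟨z, ẑ⟩ = ‖ẑ‖²`, `E‖z‖² = ‖ẑ‖² + tr P`, so Jensen again yields
`E[cos² θ] ≥ ‖ẑ‖² / (‖ẑ‖² + tr P)`; finally `arccos` is antitone. -/

section DotProduct

variable {n : Type*} [Fintype n]

lemma dotProduct_self_nonneg (v : n → ℝ) : 0 ≤ v ⬝ᵥ v := by
  simpa using dotProduct_star_self_nonneg v

lemma dotProduct_self_pos {v : n → ℝ} (hv : v ≠ 0) : 0 < v ⬝ᵥ v :=
  (dotProduct_self_nonneg v).lt_of_ne' (dotProduct_self_eq_zero.not.mpr hv)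

lemma dotProduct_sq_le (v w : n → ℝ) : (v ⬝ᵥ w) ^ 2 ≤ (v ⬝ᵥ v) * (w ⬝ᵥ w) := by
  simpa [dotProduct, sq] using Finset.sum_mul_sq_le_sq_mul_sq Finset.univ v w

lemma cos_arccos_dotProduct_div_sq (v w : n → ℝ) :
    cos (arccos (v ⬝ᵥ w / (√(v ⬝ᵥ v) * √(w ⬝ᵥ w)))) ^ 2
      = (v ⬝ᵥ w) ^ 2 / (v ⬝ᵥ v) / (w ⬝ᵥ w) := by
  have hv := dotProduct_self_nonneg v
  have hw := dotProduct_self_nonneg w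
  have habs : |v ⬝ᵥ w / (√(v ⬝ᵥ v) * √(w ⬝ᵥ w))| ≤ 1 := by
    rw [abs_div, abs_of_nonneg (mul_nonneg (sqrt_nonneg _) (sqrt_nonneg _)),
      ← sqrt_mul hv]
    exact div_le_one_of_le₀ (abs_le_sqrt (dotProduct_sq_le v w)) (sqrt_nonneg _)
  rw [cos_arccos (abs_le.mp habs).1 (abs_le.mp habs).2, div_pow, mul_pow, sq_sqrt hv,
    sq_sqrt hw, div_div]

lemma two_mul_mul_sub_sq_mul_le_sq_div (r : ℝ) {x y : ℝ} (hy : 0 < y) :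
    2 * r * x - r ^ 2 * y ≤ x ^ 2 / y := by
  rw [le_div_iff₀ hy]
  nlinarith [sq_nonneg (x - r * y)]

lemma two_mul_mul_dotProduct_sub_le (r : ℝ) (v w : n → ℝ) :
    2 * r * (v ⬝ᵥ w) - r ^ 2 * (v ⬝ᵥ v) ≤ (v ⬝ᵥ w) ^ 2 / (v ⬝ᵥ v) := by
  rcases eq_or_ne v 0 with rfl | hv
  · simp
  · exact two_mul_mul_sub_sq_mul_le_sq_div r (dotProduct_self_pos hv)

lemma dotProduct_sq_div_le (v w : n → ℝ) : (v ⬝ᵥ w) ^ 2 / (v ⬝ᵥ v) ≤ w ⬝ᵥ w :=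
  div_le_of_le_mul₀ (dotProduct_self_nonneg v) (dotProduct_self_nonneg w)
    ((dotProduct_sq_le v w).trans_eq (mul_comm _ _))

lemma add_dotProduct_add_self (v w : n → ℝ) :
    (w + v) ⬝ᵥ (w + v) = w ⬝ᵥ w + 2 * (v ⬝ᵥ w) + v ⬝ᵥ v := by
  simp only [add_dotProduct, dotProduct_add, dotProduct_comm w v]
  ring

end DotProduct

section Integral

variable {Ω : Type*} [MeasurableSpace Ω] {μ : Measure Ω} {n : Type*} [Fintype n]

lemma integrable_dotProduct_const {e : Ω → n → ℝ} (hint : ∀ i, Integrable (fun ω => e ω i) μ)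
    (w : n → ℝ) : Integrable (fun ω => e ω ⬝ᵥ w) μ :=
  integrable_finsetSum _ fun i _ => (hint i).mul_const _

lemma integral_dotProduct_const_eq_zero {e : Ω → n → ℝ} (hint : ∀ i, Integrable (fun ω => e ω i) μ)
    (hmean : ∀ i, ∫ ω, e ω i ∂μ = 0) (w : n → ℝ) : ∫ ω, e ω ⬝ᵥ w ∂μ = 0 := by
  simp only [dotProduct]
  rw [integral_finsetSum _ fun i _ => (hint i).mul_const _]
  simp [integral_mul_const, hmean]

lemma integrable_dotProduct_sq_div [IsFiniteMeasure μ] {v : Ω → n → ℝ} (hv : Measurable v)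
    (w : n → ℝ) : Integrable (fun ω => (v ω ⬝ᵥ w) ^ 2 / (v ω ⬝ᵥ v ω)) μ := by
  refine .of_bound (Measurable.aestronglyMeasurable (by fun_prop)) (w ⬝ᵥ w)
    (ae_of_all _ fun ω => ?_)
  rw [Real.norm_eq_abs, abs_of_nonneg (div_nonneg (sq_nonneg _) (dotProduct_self_nonneg _))]
  exact dotProduct_sq_div_le _ _

lemma sq_integral_div_integral_le_integral_sq_div [IsFiniteMeasure μ] {v : Ω → n → ℝ}
    (hv : Measurable v) (w : n → ℝ) (hvw : Integrable (fun ω => v ω ⬝ᵥ w) μ)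
    (hvv : Integrable (fun ω => v ω ⬝ᵥ v ω) μ) :
    (∫ ω, v ω ⬝ᵥ w ∂μ) ^ 2 / ∫ ω, v ω ⬝ᵥ v ω ∂μ ≤ ∫ ω, (v ω ⬝ᵥ w) ^ 2 / (v ω ⬝ᵥ v ω) ∂μ := by
  set X := ∫ ω, v ω ⬝ᵥ w ∂μ
  set Y := ∫ ω, v ω ⬝ᵥ v ω ∂μ
  -- integrate the tangent plane of `(x, y) ↦ x ^ 2 / y` at `(X, Y)`
  have htangent : X ^ 2 / Y = 2 * (X / Y) * X - (X / Y) ^ 2 * Y := by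
    rcases eq_or_ne Y 0 with hY | hY
    · simp [hY]
    · field_simp
      ring
  calc X ^ 2 / Y = ∫ ω, 2 * (X / Y) * (v ω ⬝ᵥ w) - (X / Y) ^ 2 * (v ω ⬝ᵥ v ω) ∂μ := by
        rw [integral_sub (hvw.const_mul _) (hvv.const_mul _), integral_const_mul,
          integral_const_mul, htangent]
    _ ≤ ∫ ω, (v ω ⬝ᵥ w) ^ 2 / (v ω ⬝ᵥ v ω) ∂μ :=
        integral_mono ((hvw.const_mul _).sub (hvv.const_mul _))
          (integrable_dotProduct_sq_div hv w) fun ω => two_mul_mul_dotProduct_sub_le _ _ _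

variable [IsProbabilityMeasure μ]

lemma integral_le_arccos_integral_cos {φ : Ω → ℝ} (hφ : ∀ᵐ ω ∂μ, φ ω ∈ Icc 0 (π / 2))
    (hint : Integrable φ μ) : ∫ ω, φ ω ∂μ ≤ arccos (∫ ω, cos (φ ω) ∂μ) := by
  have hmem := (convex_Icc _ _).integral_mem isClosed_Icc hφ hint
  have hcos_int : Integrable (fun ω => cos (φ ω)) μ :=
    .of_bound (continuous_cos.comp_aestronglyMeasurable hint.aestronglyMeasurable) 1
      (ae_of_all _ fun ω => by simpa using abs_cos_le_one (φ ω))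
  have hjensen : ∫ ω, cos (φ ω) ∂μ ≤ cos (∫ ω, φ ω ∂μ) :=
    (strictConcaveOn_cos_Icc.concaveOn.subset
        (Icc_subset_Icc (by linarith [pi_pos]) le_rfl) (convex_Icc _ _)).le_map_integral
      continuous_cos.continuousOn isClosed_Icc hφ hint hcos_int
  calc ∫ ω, φ ω ∂μ = arccos (cos (∫ ω, φ ω ∂μ)) :=
        (arccos_cos hmem.1 (hmem.2.trans (by linarith [pi_pos]))).symm
    _ ≤ arccos (∫ ω, cos (φ ω) ∂μ) := arccos_le_arccos hjensen

variable {e : Ω → n → ℝ}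

lemma integrable_add_dotProduct_const (hint : ∀ i, Integrable (fun ω => e ω i) μ) (w : n → ℝ) :
    Integrable (fun ω => (w + e ω) ⬝ᵥ w) μ := by
  simp only [add_dotProduct]
  exact (integrable_const _).add (integrable_dotProduct_const hint w)

lemma integral_add_dotProduct_const (hint : ∀ i, Integrable (fun ω => e ω i) μ)
    (hmean : ∀ i, ∫ ω, e ω i ∂μ = 0) (w : n → ℝ) : ∫ ω, (w + e ω) ⬝ᵥ w ∂μ = w ⬝ᵥ w := by
  simp only [add_dotProduct]
  rw [integral_add (integrable_const _) (integrable_dotProduct_const hint w), integral_const,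
    integral_dotProduct_const_eq_zero hint hmean]
  simp

lemma integrable_add_dotProduct_self (hint : ∀ i, Integrable (fun ω => e ω i) μ)
    (hsq : Integrable (fun ω => e ω ⬝ᵥ e ω) μ) (w : n → ℝ) :
    Integrable (fun ω => (w + e ω) ⬝ᵥ (w + e ω)) μ := by
  simp only [add_dotProduct_add_self]
  exact ((integrable_const _).add ((integrable_dotProduct_const hint w).const_mul 2)).add hsq

lemma integral_add_dotProduct_self (hint : ∀ i, Integrable (fun ω => e ω i) μ)
    (hmean : ∀ i, ∫ ω, e ω i ∂μ = 0) (hsq : Integrable (fun ω => e ω ⬝ᵥ e ω) μ) (w : n → ℝ) :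
    ∫ ω, (w + e ω) ⬝ᵥ (w + e ω) ∂μ = w ⬝ᵥ w + ∫ ω, e ω ⬝ᵥ e ω ∂μ := by
  have hcross : Integrable (fun ω => 2 * (e ω ⬝ᵥ w)) μ :=
    (integrable_dotProduct_const hint w).const_mul 2
  have hlin : Integrable (fun ω => w ⬝ᵥ w + 2 * (e ω ⬝ᵥ w)) μ := (integrable_const _).add hcross
  simp only [add_dotProduct_add_self]
  rw [integral_add hlin hsq,
    integral_add (integrable_const _) hcross, integral_const_mul,
    integral_dotProduct_const_eq_zero hint hmean]
  simp

lemma integral_cos_two_mul {φ : Ω → ℝ} (hφ : AEStronglyMeasurable φ μ) :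
    ∫ ω, cos (2 * φ ω) ∂μ = 2 * ∫ ω, cos (φ ω) ^ 2 ∂μ - 1 := by
  have hcos_sq : Integrable (fun ω => cos (φ ω) ^ 2) μ :=
    Integrable.of_bound ((continuous_cos.pow 2).comp_aestronglyMeasurable hφ) 1
      (ae_of_all _ fun ω => by simpa [abs_le] using cos_sq_le_one (φ ω))
  simp only [cos_two_mul]
  rw [integral_sub (hcos_sq.const_mul 2) (integrable_const 1), integral_const_mul]
  simp

lemma div_add_integral_le_integral_cos_arccos_sq {w : n → ℝ} (hw : w ≠ 0) (he : Measurable e)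
    (hint : ∀ i, Integrable (fun ω => e ω i) μ) (hmean : ∀ i, ∫ ω, e ω i ∂μ = 0)
    (hsq : Integrable (fun ω => e ω ⬝ᵥ e ω) μ) :
    w ⬝ᵥ w / (w ⬝ᵥ w + ∫ ω, e ω ⬝ᵥ e ω ∂μ) ≤ ∫ ω, cos (arccos
      ((w + e ω) ⬝ᵥ w / (√((w + e ω) ⬝ᵥ (w + e ω)) * √(w ⬝ᵥ w)))) ^ 2 ∂μ := by
  have hjensen := sq_integral_div_integral_le_integral_sq_div (v := fun ω => w + e ω)
    (measurable_const.add he) w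
    (integrable_add_dotProduct_const hint w) (integrable_add_dotProduct_self hint hsq w)
  rw [integral_add_dotProduct_const hint hmean, integral_add_dotProduct_self hint hmean hsq]
    at hjensen
  simp only [cos_arccos_dotProduct_div_sq]
  rw [integral_div, le_div_iff₀ (dotProduct_self_pos hw)]
  calc w ⬝ᵥ w / (w ⬝ᵥ w + ∫ ω, e ω ⬝ᵥ e ω ∂μ) * (w ⬝ᵥ w)
      = (w ⬝ᵥ w) ^ 2 / (w ⬝ᵥ w + ∫ ω, e ω ⬝ᵥ e ω ∂μ) := by ring
    _ ≤ _ := hjensen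

end Integral

theorem expected_angle_bound_general
    {Ω : Type*} [MeasurableSpace Ω] (μ : Measure Ω) [IsProbabilityMeasure μ]
    {d : ℕ} (zhat : Fin d → ℝ) (hzhat : zhat ≠ 0)
    (e : Ω → Fin d → ℝ) (he : Measurable e)
    (z : Ω → Fin d → ℝ) (hz : ∀ ω, z ω = zhat + e ω)
    (P : Matrix (Fin d) (Fin d) ℝ)
    (h_mean : ∀ i, Integrable (fun ω => e ω i) μ ∧ ∫ ω, e ω i ∂μ = 0)
    (h_int_sq : Integrable (fun ω => e ω ⬝ᵥ e ω) μ)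
    (h_cov : ∫ ω, e ω ⬝ᵥ e ω ∂μ = P.trace)
    (θ : Ω → ℝ)
    (hθ : ∀ ω, θ ω = Real.arccos
      ((z ω ⬝ᵥ zhat) / (Real.sqrt (z ω ⬝ᵥ z ω) * Real.sqrt (zhat ⬝ᵥ zhat))))
    (hθ_range : ∀ᵐ ω ∂μ, θ ω ∈ Set.Icc 0 (Real.pi / 4)) :
    ∫ ω, θ ω ∂μ
      ≤ (1 / 2) * Real.arccos (2 * (zhat ⬝ᵥ zhat) / (zhat ⬝ᵥ zhat + P.trace) - 1) := by
  obtain rfl : z = fun ω => zhat + e ω := funext hz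
  have hθ_meas : Measurable θ := by
    rw [funext hθ]
    exact continuous_arccos.measurable.comp (by fun_prop)
  have hθ_int : Integrable θ μ := .of_mem_Icc 0 (π / 4) hθ_meas.aemeasurable hθ_range
  have hcos_sq : zhat ⬝ᵥ zhat / (zhat ⬝ᵥ zhat + P.trace) ≤ ∫ ω, cos (θ ω) ^ 2 ∂μ := by
    simpa only [h_cov, ← hθ] using div_add_integral_le_integral_cos_arccos_sq hzhat he
      (fun i => (h_mean i).1) (fun i => (h_mean i).2) h_int_sq
  calc ∫ ω, θ ω ∂μ = 1 / 2 * ∫ ω, 2 * θ ω ∂μ := by rw [integral_const_mul]; ring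
    _ ≤ 1 / 2 * arccos (∫ ω, cos (2 * θ ω) ∂μ) := by
        gcongr
        refine integral_le_arccos_integral_cos (hθ_range.mono fun ω h => ?_) (hθ_int.const_mul 2)
        constructor <;> linarith [h.1, h.2]
    _ = 1 / 2 * arccos (2 * ∫ ω, cos (θ ω) ^ 2 ∂μ - 1) := by
        rw [integral_cos_two_mul hθ_meas.aestronglyMeasurable]
    _ ≤ _ := by
        gcongr
        rw [mul_div_assoc]
        linarith

/-- For `z = ẑ + e` with `ẑ` fixed nonzero, `E[e] = 0`, `E[‖e‖²] = tr P`, and angle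
`θ ∈ [0, π/4]` between `z` and `ẑ`, we have
`E[θ] ≤ (1/2) arccos (2‖ẑ‖²/(‖ẑ‖² + tr P) − 1)`, provided the argument of `arccos`
lies in `[−1, 1]`. -/
theorem expected_angle_bound
    {Ω : Type*} [MeasurableSpace Ω] (μ : Measure Ω) [IsProbabilityMeasure μ]
    {d : ℕ} (zhat : Fin d → ℝ) (hzhat : zhat ≠ 0)
    (e : Ω → Fin d → ℝ) (he : Measurable e)
    (z : Ω → Fin d → ℝ) (hz : ∀ ω, z ω = zhat + e ω)
    (hz_ne : ∀ᵐ ω ∂μ, z ω ≠ 0)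
    (P : Matrix (Fin d) (Fin d) ℝ)
    (h_mean : ∀ i, Integrable (fun ω => e ω i) μ ∧ ∫ ω, e ω i ∂μ = 0)
    (h_int_sq : Integrable (fun ω => e ω ⬝ᵥ e ω) μ)
    (h_cov : ∫ ω, e ω ⬝ᵥ e ω ∂μ = P.trace)
    (θ : Ω → ℝ)
    (hθ : ∀ ω, θ ω = Real.arccos
      ((z ω ⬝ᵥ zhat) / (Real.sqrt (z ω ⬝ᵥ z ω) * Real.sqrt (zhat ⬝ᵥ zhat))))
    (hθ_range : ∀ᵐ ω ∂μ, θ ω ∈ Set.Icc 0 (Real.pi / 4))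
    (harg : 2 * (zhat ⬝ᵥ zhat) / (zhat ⬝ᵥ zhat + P.trace) - 1 ∈ Set.Icc (-1 : ℝ) 1) :
    ∫ ω, θ ω ∂μ
      ≤ (1 / 2) * Real.arccos (2 * (zhat ⬝ᵥ zhat) / (zhat ⬝ᵥ zhat + P.trace) - 1) :=
  expected_angle_bound_general μ zhat hzhat e he z hz P h_mean h_int_sq h_cov θ hθ hθ_range
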